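/- If λ_3(G) = n − 3 for a connected graph G of order n, then the complement of G has maximum degree at most 2, i.e., every component of the complement of G is a path or a cycle. -/

import Mathlib

open SimpleGraph

/-- An `S`-Steiner tree in `G`: a subgraph of `G` that is a tree whose
vertex set contains `S`. -/
def SimpleGraph.IsSteinerTree {V : Type*} (G : SimpleGraph V) (S : Set V)
    (T : G.Subgraph) : Prop :=
  S ⊆ T.verts ∧ T.coe.IsTree

/-- The generalized local edge-connectivity `λ(S)`: the maximum number of
pairwise edge-disjoint `S`-Steiner trees in `G`. -/
noncomputable def SimpleGraph.steinerLambda {V : Type*} (G : SimpleGraph V)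
    (S : Set V) : ℕ :=
  sSup {n | ∃ T : Fin n → G.Subgraph, (∀ i, G.IsSteinerTree S (T i)) ∧
    ∀ i j, i ≠ j → Disjoint (T i).edgeSet (T j).edgeSet}

/-- The generalized `k`-edge-connectivity `λ_k(G)`:
the minimum of `λ(S)` over all `k`-element vertex subsets `S`. -/
noncomputable def SimpleGraph.genEdgeConn {V : Type*} (G : SimpleGraph V)
    (k : ℕ) : ℕ :=
  sInf {m | ∃ S : Set V, S.ncard = k ∧ G.steinerLambda S = m}

/-! A vertex `v` with three non-neighbours has degree at most `n - 4`. For two of those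
non-neighbours `a, b`, every Steiner tree for `S = {v, a, b}` uses an edge at `v`, and
edge-disjoint trees use distinct such edges, so `λ_3(G) ≤ λ(S) ≤ deg v ≤ n - 4 < n - 3`. -/

namespace SimpleGraph

variable {V : Type*} {G : SimpleGraph V} {S : Set V} {u v : V}

lemma IsSteinerTree.exists_adj {T : G.Subgraph} (hT : G.IsSteinerTree S T)
    (hv : v ∈ S) (hu : u ∈ S) (huv : u ≠ v) : ∃ w, T.Adj v w := by
  have : Nontrivial T.verts := (Set.nontrivial_of_mem_mem_ne (hT.1 hv) (hT.1 hu) huv.symm).coe_sort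
  exact Subgraph.Preconnected.exists_adj_of_nontrivial
    ⟨hT.2.connected.preconnected⟩ ⟨v, hT.1 hv⟩

lemma steinerLambda_le_degree [Fintype (G.neighborSet v)]
    (hv : v ∈ S) (hu : u ∈ S) (huv : u ≠ v) : G.steinerLambda S ≤ G.degree v := by
  refine csSup_le' ?_
  rintro m ⟨T, hT, hdisj⟩
  choose w hw using fun i ↦ (hT i).exists_adj hv hu huv
  have hinj : Function.Injective fun i ↦ (⟨w i, (T i).adj_sub (hw i)⟩ : G.neighborSet v) := by
    intro i j hij
    by_contra hne
    have hwij : w i = w j := congrArg Subtype.val hij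
    have hwj : s(v, w i) ∈ (T j).edgeSet := hwij ▸ hw j
    exact Set.disjoint_left.mp (hdisj i j hne) (hw i) hwj
  calc m = Fintype.card (Fin m) := (Fintype.card_fin m).symm
    _ ≤ Fintype.card (G.neighborSet v) := Fintype.card_le_of_injective _ hinj
    _ = G.degree v := G.card_neighborSet_eq_degree v

lemma genEdgeConn_le_steinerLambda {k : ℕ} (hS : S.ncard = k) :
    G.genEdgeConn k ≤ G.steinerLambda S :=
  Nat.sInf_le ⟨S, hS, rfl⟩

lemma genEdgeConn_three_le_degree {a b : V} [Fintype (G.neighborSet v)]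
    (ha : Gᶜ.Adj v a) (hb : Gᶜ.Adj v b) (hab : a ≠ b) : G.genEdgeConn 3 ≤ G.degree v := by
  have hS : ({v, a, b} : Set V).ncard = 3 :=
    Set.ncard_eq_three.mpr ⟨v, a, b, ha.ne, hb.ne, hab, rfl⟩
  calc G.genEdgeConn 3 ≤ G.steinerLambda {v, a, b} := genEdgeConn_le_steinerLambda hS
    _ ≤ G.degree v := steinerLambda_le_degree (by simp) (by simp) ha.ne.symm

end SimpleGraph

theorem compl_maxDegree_le_two_of_lambda_three_general {V : Type*} [Fintype V]
    (G : SimpleGraph V) (n : ℕ) (hn : Fintype.card V = n)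
    (h : G.genEdgeConn 3 = n - 3) :
    ∀ v : V, (Gᶜ.neighborSet v).ncard ≤ 2 := by
  classical
  intro v
  by_contra! hv
  obtain ⟨a, b, ha, hb, hab⟩ :=
    (Set.one_lt_ncard_iff (Set.toFinite (Gᶜ.neighborSet v))).mp (by omega)
  have hcompl : Gᶜ.degree v = n - 1 - G.degree v := hn ▸ degree_compl G v
  have hdeg : (Gᶜ.neighborSet v).ncard = Gᶜ.degree v := by
    rw [Set.ncard_eq_toFinset_card', Set.toFinset_card, card_neighborSet_eq_degree]
  have := genEdgeConn_three_le_degree ha hb hab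
  omega

theorem compl_maxDegree_le_two_of_lambda_three {V : Type*} [Fintype V]
    (G : SimpleGraph V) (n : ℕ) (hn : Fintype.card V = n) (hG : G.Connected)
    (h : G.genEdgeConn 3 = n - 3) :
    ∀ v : V, (Gᶜ.neighborSet v).ncard ≤ 2 :=
  compl_maxDegree_le_two_of_lambda_three_general G n hn h
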